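/- arXiv:1803.06499 — 2 statements merged into one kernel-verified Lean document; each statement's English description precedes it below -/
import Mathlib

section
/- The symmetrized polydisc 𝔾_n = π_n(𝔻^n) is a bounded domain in ℂ^n: it is an open, connected and bounded subset of ℂ^n. -/
/-- The symmetrization map `π_n : ℂ^n → ℂ^n`, whose `k`-th component is the `k`-th
elementary symmetric polynomial of the coordinates. -/
noncomputable def symmMap (n : ℕ) (lam : Fin n → ℂ) : Fin n → ℂ :=
  fun k => ∑ t ∈ Finset.powersetCard (k.1 + 1) Finset.univ, ∏ i ∈ t, lam i

/-- The open unit polydisc `𝔻^n ⊆ ℂ^n`. -/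
def polydisc (n : ℕ) : Set (Fin n → ℂ) := {z | ∀ i, ‖z i‖ < 1}

/-- The symmetrized polydisc `𝔾_n = π_n(𝔻^n)`. -/
noncomputable def symmPolydisc (n : ℕ) : Set (Fin n → ℂ) := symmMap n '' polydisc n

/-!
The point `π_n λ` lists the coefficients of `∏ i, (X + λ i)`. Over `ℂ` every monic polynomial
splits, so `π_n` is surjective, and `π_n λ = π_n μ` forces every `λ i` to be some `μ j`; hence
`π_n⁻¹ (𝔾_n) = 𝔻^n`. Cauchy's bound on the roots gives `‖λ‖ ≤ ‖π_n λ‖ + 1`, so `π_n` is proper,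
hence closed, hence a quotient map, and `𝔾_n` is open because its preimage `𝔻^n` is.
Connectedness and boundedness come from continuity: `𝔾_n` is the image of a ball and lies in the
image of the compact closed ball.
-/

open Polynomial Filter Topology

theorem Multiset.exists_univ_val_map_eq {α : Type*} {n : ℕ} {s : Multiset α}
    (hs : Multiset.card s = n) : ∃ f : Fin n → α, Finset.univ.val.map f = s := by
  obtain ⟨l, rfl⟩ : ∃ l : List α, (l : Multiset α) = s := ⟨s.toList, s.coe_toList⟩
  rw [Multiset.coe_card] at hs
  subst hs
  exact ⟨fun i => l[i.1], by rw [Fin.univ_val_map, List.ofFn_getElem]⟩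

theorem isProperMap_of_norm_le_norm_add_const {E F : Type*} [NormedAddCommGroup E]
    [ProperSpace E] [NormedAddCommGroup F] [ProperSpace F] {f : E → F} (hf : Continuous f)
    (C : ℝ) (hC : ∀ x, ‖x‖ ≤ ‖f x‖ + C) : IsProperMap f := by
  refine isProperMap_iff_tendsto_cocompact.mpr ⟨hf, ?_⟩
  rw [← Metric.cobounded_eq_cocompact, ← Metric.cobounded_eq_cocompact,
    ← tendsto_norm_atTop_iff_cobounded]
  refine tendsto_atTop_mono (fun x => sub_le_iff_le_add.mpr (hC x)) ?_
  exact tendsto_atTop_add_const_right _ (-C) tendsto_norm_cobounded_atTop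

theorem continuous_symmMap (n : ℕ) : Continuous (symmMap n) := by
  unfold symmMap; fun_prop

/-- `ofFn` lists coefficients from `X ^ 0` upwards, while the `k`-th component of `symmMap`
is the coefficient of `X ^ (n - 1 - k)`; hence `k.rev`. -/
theorem prod_X_add_C_eq_X_pow_add_ofFn (n : ℕ) (lam : Fin n → ℂ) :
    ∏ i, (X + C (lam i)) = X ^ n + ofFn n (fun k => symmMap n lam k.rev) := by
  ext j
  rw [coeff_add, coeff_X_pow]
  rcases lt_trichotomy j n with hj | rfl | hj
  · rw [Finset.prod_X_add_C_coeff _ _ (by simpa using hj.le), ofFn_coeff_eq_val_of_lt _ hj,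
      if_neg hj.ne, zero_add, symmMap]
    congr 2
    simp only [Finset.card_univ, Fintype.card_fin, Fin.val_rev]
    omega
  · rw [Finset.prod_X_add_C_coeff _ _ (by simp), ofFn_coeff_eq_zero_of_ge _ le_rfl]
    simp
  · rw [coeff_eq_zero_of_natDegree_lt, ofFn_coeff_eq_zero_of_ge _ hj.le, if_neg hj.ne']
    · simp
    · rw [natDegree_prod_of_monic _ _ fun i _ => monic_X_add_C _]
      simpa using hj

theorem isRoot_prod_X_add_C_neg {n : ℕ} (lam : Fin n → ℂ) (i : Fin n) :
    (∏ j, (X + C (lam j))).IsRoot (-lam i) := by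
  rw [IsRoot, eval_prod]
  exact Finset.prod_eq_zero (Finset.mem_univ i) (by simp)

theorem symmMap_surjective (n : ℕ) : Function.Surjective (symmMap n) := by
  intro c
  set p : ℂ[X] := X ^ n + ofFn n (fun k => c k.rev)
  have hp : p.Monic := monic_X_pow_add (ofFn_degree_lt _)
  have hdeg : p.natDegree = n := by
    rw [natDegree_add_eq_left_of_degree_lt (by rw [degree_X_pow]; exact ofFn_degree_lt _),
      natDegree_X_pow]
  have hsplit : Splits p := IsAlgClosed.splits p
  obtain ⟨lam, hlam⟩ : ∃ lam : Fin n → ℂ, Finset.univ.val.map lam = p.roots.map Neg.neg := by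
    refine Multiset.exists_univ_val_map_eq ?_
    rw [Multiset.card_map, ← hdeg, ← splits_iff_card_roots.mp hsplit]
  have hprod : ∏ i, (X + C (lam i)) = p :=
    calc ∏ i, (X + C (lam i)) = ((Finset.univ.val.map lam).map fun r => X + C r).prod := by
          rw [Multiset.map_map]; rfl
      _ = (p.roots.map fun r => X - C r).prod := by
          rw [hlam, Multiset.map_map]; simp [sub_eq_add_neg]
      _ = p := (hsplit.eq_prod_roots_of_monic hp).symm
  refine ⟨lam, funext fun k => ?_⟩
  rw [prod_X_add_C_eq_X_pow_add_ofFn, add_right_inj] at hprod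
  simpa using congrFun (injective_ofFn n hprod) k.rev

theorem prod_X_add_C_eq_of_symmMap_eq {n : ℕ} {lam mu : Fin n → ℂ}
    (h : symmMap n lam = symmMap n mu) : ∏ i, (X + C (lam i)) = ∏ i, (X + C (mu i)) := by
  rw [prod_X_add_C_eq_X_pow_add_ofFn, prod_X_add_C_eq_X_pow_add_ofFn, h]

theorem exists_eq_of_symmMap_eq {n : ℕ} {lam mu : Fin n → ℂ}
    (h : symmMap n lam = symmMap n mu) (i : Fin n) : ∃ j, lam i = mu j := by
  have hroot := isRoot_prod_X_add_C_neg lam i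
  rw [prod_X_add_C_eq_of_symmMap_eq h, IsRoot, eval_prod, Finset.prod_eq_zero_iff] at hroot
  obtain ⟨j, -, hj⟩ := hroot
  exact ⟨j, by simpa [neg_add_eq_zero] using hj⟩

theorem norm_le_norm_symmMap_add_one (n : ℕ) (lam : Fin n → ℂ) :
    ‖lam‖ ≤ ‖symmMap n lam‖ + 1 := by
  set p : ℂ[X] := ∏ i, (X + C (lam i))
  have hp : p.Monic := monic_prod_of_monic _ _ fun i _ => monic_X_add_C _
  have hdeg : p.natDegree = n := by
    rw [natDegree_prod_of_monic _ _ fun i _ => monic_X_add_C _]; simp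
  have hcoeff : ∀ j ∈ Finset.range p.natDegree, ‖p.coeff j‖₊ ≤ ‖symmMap n lam‖₊ := by
    intro j hj
    rw [hdeg, Finset.mem_range] at hj
    rw [show p = _ from prod_X_add_C_eq_X_pow_add_ofFn n lam, coeff_add, coeff_X_pow,
      if_neg hj.ne, zero_add, ofFn_coeff_eq_val_of_lt _ hj]
    exact nnnorm_le_pi_nnnorm _ _
  have hbound : cauchyBound p ≤ ‖symmMap n lam‖₊ + 1 := by
    rw [cauchyBound, hp.leadingCoeff, nnnorm_one, div_one]
    gcongr
    exact Finset.sup_le hcoeff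
  refine (pi_norm_le_iff_of_nonneg (by positivity)).mpr fun i => ?_
  have hlt := ((isRoot_prod_X_add_C_neg lam i).norm_lt_cauchyBound hp.ne_zero).trans_le hbound
  rw [nnnorm_neg] at hlt
  exact_mod_cast hlt.le

theorem polydisc_eq_ball (n : ℕ) : polydisc n = Metric.ball 0 1 := by
  ext z
  rw [mem_ball_zero_iff, pi_norm_lt_iff one_pos]
  rfl

theorem preimage_symmMap_symmPolydisc (n : ℕ) : symmMap n ⁻¹' symmPolydisc n = polydisc n := by
  refine (Set.subset_preimage_image _ _).antisymm' ?_
  rintro lam ⟨mu, hmu, h⟩ i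
  obtain ⟨j, hj⟩ := exists_eq_of_symmMap_eq h.symm i
  exact hj ▸ hmu j

theorem isQuotientMap_symmMap (n : ℕ) : IsQuotientMap (symmMap n) :=
  (isProperMap_of_norm_le_norm_add_const (continuous_symmMap n) 1
    (norm_le_norm_symmMap_add_one n)).isClosedMap.isQuotientMap
    (continuous_symmMap n) (symmMap_surjective n)

/-- The symmetrized polydisc `𝔾_n` is a bounded domain in `ℂ^n`: open, connected
and bounded. -/
theorem symmPolydisc_isOpen_isConnected_isBounded (n : ℕ) :
    IsOpen (symmPolydisc n) ∧ IsConnected (symmPolydisc n) ∧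
      Bornology.IsBounded (symmPolydisc n) := by
  have hball := polydisc_eq_ball n
  refine ⟨?_, ?_, ?_⟩
  · rw [← (isQuotientMap_symmMap n).isOpen_preimage, preimage_symmMap_symmPolydisc, hball]
    exact Metric.isOpen_ball
  · rw [symmPolydisc, hball]
    exact ((convex_ball 0 1).isConnected (Metric.nonempty_ball.mpr one_pos)).image _
      (continuous_symmMap n).continuousOn
  · refine ((isCompact_closedBall 0 1).image (continuous_symmMap n)).isBounded.subset ?_
    rw [symmPolydisc, hball]
    exact Set.image_mono Metric.ball_subset_closedBall
end

section
/- There exist polynomials H_1 and H_2 in 2n complex variables, with H_2(ξ, conj(η)) ≠ 0 for all ξ, η ∈ 𝔾_n, such that for all λ, μ ∈ 𝔻^n each having pairwise distinct coordinates, det[(1 − λ_j · conj(μ_k))^{−2}]_{1≤j,k≤n} / (V(λ) · conj(V(μ))) = H_1(π_n(λ), conj(π_n(μ))) / H_2(π_n(λ), conj(π_n(μ))). (In particular, by the Edigarian–Zwonek formula, the Bergman kernel of the symmetrized polydisc 𝔾_n is a rational function.) -/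
open MvPolynomial

/-- The Vandermonde product `V(λ) = ∏_{j<k} (λ_j − λ_k)`. -/
def vandermondeProd (n : ℕ) (lam : Fin n → ℂ) : ℂ :=
  ∏ j : Fin n, ∏ k ∈ Finset.Ioi j, (lam j - lam k)

/-!
Clearing denominators, `det[(1 - x_j y_k)⁻²] = N(x, y) / D(x, y)` with
`D = ∏_{j,k} (1 - x_j y_k)²` and `N = det[∏_{l ≠ k} (1 - x_j y_l)²]`. The polynomial `D` is
symmetric in `x` and in `y` separately, while `N` is alternating in each block, so it vanishes
where two variables of a block coincide and is divisible by `V(x) V(y)`, the linear factors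
`X a - X b` being pairwise non-associated primes. The quotient `N / (V(x) V(y))` is again
symmetric in each block. Viewing polynomials in `x, y` as polynomials in `x` with coefficients
in `ℂ[y]`, the fundamental theorem of symmetric polynomials applied to both blocks writes every
such polynomial as `H(π(x), π(y))`. Evaluating at `x = λ`, `y = conj μ` gives the theorem;
`D` does not vanish on `𝔻ⁿ × 𝔻ⁿ`.
-/

theorem Finset.prod_dvd_of_prime {α ι : Type*} [CommMonoidWithZero α] [IsCancelMulZero α]
    {s : Finset ι} {f : ι → α} {z : α} (hp : ∀ i ∈ s, Prime (f i))
    (hf : (s : Set ι).Pairwise fun i j => ¬ f i ∣ f j) (hz : ∀ i ∈ s, f i ∣ z) :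
    ∏ i ∈ s, f i ∣ z := by
  classical
  induction s using Finset.induction_on generalizing z with
  | empty => simp
  | insert a s ha ih =>
    simp only [Finset.mem_insert, forall_eq_or_imp] at hp hz
    obtain ⟨y, rfl⟩ := hz.1
    have hy : ∀ i ∈ s, f i ∣ y := fun i hi =>
      ((hp.2 i hi).dvd_or_dvd (hz.2 i hi)).resolve_left
        (hf (by simp [hi]) (by simp) (by rintro rfl; exact ha hi))
    rw [Finset.prod_insert ha]
    exact mul_dvd_mul_left _ (ih hp.2 (hf.mono (by simp)) hy)

theorem Finset.prod_prod_Ioi_sub_comp_perm {A : Type*} [CommRing A] {n : ℕ} (v : Fin n → A)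
    (σ : Equiv.Perm (Fin n)) :
    ∏ j, ∏ k ∈ Finset.Ioi j, (v (σ j) - v (σ k)) =
      Equiv.Perm.sign σ * ∏ j, ∏ k ∈ Finset.Ioi j, (v j - v k) := by
  have hdet (w : Fin n → A) : ∏ j, ∏ k ∈ Finset.Ioi j, (w j - w k) =
      (∏ j : Fin n, ∏ _k ∈ Finset.Ioi j, (-1 : A)) * (Matrix.vandermonde w).det := by
    simp only [Matrix.det_vandermonde, ← Finset.prod_mul_distrib, neg_one_mul, neg_sub]
  have hperm : Matrix.vandermonde (v ∘ σ) = (Matrix.vandermonde v).submatrix σ id := rfl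
  rw [hdet, hdet, ← Function.comp_def v σ, hperm, Matrix.det_permute]
  ring

theorem Matrix.det_of_inv_eq_div {ι K : Type*} [Fintype ι] [DecidableEq ι] [Field K]
    (c : ι → ι → K) (hc : ∀ j k, c j k ≠ 0) :
    (Matrix.of fun j k => (c j k)⁻¹).det =
      (Matrix.of fun j k => ∏ l ∈ Finset.univ.erase k, c j l).det / ∏ j, ∏ l, c j l := by
  have hrow : (Matrix.of fun j k => ∏ l ∈ Finset.univ.erase k, c j l) =
      Matrix.of fun j k => (∏ l, c j l) * (c j k)⁻¹ := by
    refine Matrix.ext fun j k => ?_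
    rw [Matrix.of_apply, Matrix.of_apply, eq_mul_inv_iff_mul_eq₀ (hc j k),
      Finset.prod_erase_mul _ _ (Finset.mem_univ k)]
  have hprod : ∏ j, ∏ l, c j l ≠ 0 :=
    Finset.prod_ne_zero_iff.mpr fun j _ => Finset.prod_ne_zero_iff.mpr fun l _ => hc j l
  have hscale := Matrix.det_mul_column (fun j => ∏ l, c j l) (Matrix.of fun j k => (c j k)⁻¹)
  simp only [Matrix.of_apply] at hscale
  rw [hrow, hscale, mul_div_cancel_left₀ _ hprod]

namespace MvPolynomial

section LinearFactors

variable {R V : Type*} [CommRing R] [DecidableEq V]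

theorem X_sub_X_dvd_iff_rename_update_eq_zero {a b : V} (hab : a ≠ b) {P : MvPolynomial V R} :
    X a - X b ∣ P ↔ rename (Function.update id a b) P = 0 := by
  refine ⟨fun ⟨Q, hQ⟩ => by simp [hQ, hab.symm], fun h => ?_⟩
  let e : MvPolynomial V R ≃ₐ[R] Polynomial (MvPolynomial {v // v ≠ a} R) :=
    (renameEquiv R (Equiv.optionSubtypeNe a).symm).trans (optionEquivLeft R _)
  have hea : e (X a) = Polynomial.X := by simp [e]
  have heX (v) (hv : v ≠ a) : e (X v) = Polynomial.C (X ⟨v, hv⟩) := by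
    simp [e, Equiv.optionSubtypeNe_symm_of_ne hv]
  -- `rename (update id a b)` is `e` followed by evaluating its variable `X a` at `X b`
  have hcomp : (rename Subtype.val).toRingHom.comp
      ((Polynomial.evalRingHom (X ⟨b, hab.symm⟩)).comp e.toRingEquiv.toRingHom) =
      (rename (Function.update id a b) : MvPolynomial V R →ₐ[R] _).toRingHom := by
    refine ringHom_ext (fun r => by simp [e]) fun v => ?_
    by_cases hv : v = a
    · subst hv; simp [hea]
    · simp [heX v hv, hv]
  have hroot : (e P).IsRoot (X ⟨b, hab.symm⟩) := by
    refine rename_injective _ Subtype.val_injective ?_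
    simpa [← h] using congrArg (· P) (congrArg DFunLike.coe hcomp)
  obtain ⟨Q, hQ⟩ := Polynomial.dvd_iff_isRoot.mpr hroot
  refine ⟨e.symm Q, e.injective ?_⟩
  rw [map_mul, map_sub, hea, heX b hab.symm, AlgEquiv.apply_symm_apply, hQ]

theorem prime_X_sub_X [IsDomain R] {a b : V} (hab : a ≠ b) :
    Prime (X a - X b : MvPolynomial V R) := by
  let e : MvPolynomial V R ≃ₐ[R] Polynomial (MvPolynomial {v // v ≠ a} R) :=
    (renameEquiv R (Equiv.optionSubtypeNe a).symm).trans (optionEquivLeft R _)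
  rw [← MulEquiv.prime_iff e.toMulEquiv]
  simpa [e, Equiv.optionSubtypeNe_symm_of_ne hab.symm] using Polynomial.prime_X_sub_C _

theorem X_sub_X_dvd_of_rename_swap [IsDomain R] [CharZero R] {a b : V} (hab : a ≠ b)
    {P : MvPolynomial V R} (hP : rename (Equiv.swap a b) P = -P) : X a - X b ∣ P := by
  have hfix : Function.update id a b ∘ Equiv.swap a b = Function.update id a b := by
    ext v
    rcases eq_or_ne v a with rfl | hva
    · simp [hab.symm]
    rcases eq_or_ne v b with rfl | hvb
    · simp [hva]
    · simp [Equiv.swap_apply_of_ne_of_ne hva hvb, hva]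
  rw [X_sub_X_dvd_iff_rename_update_eq_zero hab, ← self_eq_neg]
  conv_lhs => rw [← hfix, ← rename_rename, hP, map_neg]

theorem not_X_sub_X_dvd_X_sub_X [Nontrivial R] [Preorder V] {a b c d : V} (hab : a < b)
    (hcd : c < d) (hne : (a, b) ≠ (c, d)) : ¬ (X c - X d : MvPolynomial V R) ∣ X a - X b := by
  rw [X_sub_X_dvd_iff_rename_update_eq_zero hcd.ne]
  simp only [map_sub, rename_X, sub_eq_zero]
  intro h
  replace h := X_injective h
  rcases eq_or_ne a c with rfl | hac
  · simp [hab.ne'] at h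
    exact hne (by rw [h])
  · rcases eq_or_ne b c with rfl | hbc
    · simp [hac] at h
      exact lt_irrefl _ (hab.trans (h ▸ hcd))
    · simp [hac, hbc] at h
      exact hab.ne h

theorem prod_X_sub_X_dvd [IsDomain R] [Fintype V] [Preorder V] [DecidableLT V]
    {P : MvPolynomial V R} (h : ∀ a b, a < b → X a - X b ∣ P) :
    ∏ p ∈ Finset.univ.filter (fun p : V × V => p.1 < p.2), (X p.1 - X p.2) ∣ P := by
  refine Finset.prod_dvd_of_prime (fun p hp => prime_X_sub_X (Finset.mem_filter.mp hp).2.ne)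
    (fun p hp q hq hpq => not_X_sub_X_dvd_X_sub_X (Finset.mem_filter.mp hq).2
      (Finset.mem_filter.mp hp).2 (Ne.symm hpq)) fun p hp => h _ _ (Finset.mem_filter.mp hp).2

end LinearFactors

section Symmetric

variable {R S T : Type*} [CommRing R] [CommRing S] [CommRing T] {m m' : ℕ}

theorem aeval_esymm_injective :
    Function.Injective (aeval (R := S) fun i : Fin m => esymm (Fin m) S (i + 1)) :=
  fun _ _ h =>
    esymmAlgHom_fin_injective S le_rfl (Subtype.ext (by simpa [esymmAlgHom_apply] using h))

theorem IsSymmetric.exists_aeval_esymm_eq {p : MvPolynomial (Fin m) S} (hp : p.IsSymmetric) :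
    ∃ G, aeval (R := S) (fun i : Fin m => esymm (Fin m) S (i + 1)) G = p := by
  obtain ⟨G, hG⟩ := esymmAlgHom_fin_surjective S le_rfl ⟨p, hp⟩
  exact ⟨G, by simpa [esymmAlgHom_apply] using congrArg Subtype.val hG⟩

theorem map_aeval_esymm (f : S →+* T) (G : MvPolynomial (Fin m) S) :
    map f (aeval (fun i : Fin m => esymm (Fin m) S (i + 1)) G) =
      aeval (fun i : Fin m => esymm (Fin m) T (i + 1)) (map f G) := by
  simp [aeval_eq_bind₁, map_bind₁, map_esymm]

theorem sumAlgEquiv_rename_inl {σ₁ σ₂ : Type*} (q : MvPolynomial σ₁ R) :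
    sumAlgEquiv R σ₁ σ₂ (rename Sum.inl q) = map (algebraMap R (MvPolynomial σ₂ R)) q :=
  congr($(sumAlgEquiv_comp_rename_inl R σ₁ σ₂) q)

theorem sumAlgEquiv_rename_inr {σ₁ σ₂ : Type*} (q : MvPolynomial σ₂ R) :
    sumAlgEquiv R σ₁ σ₂ (rename Sum.inr q) = C q :=
  congr($(sumAlgEquiv_comp_rename_inr R σ₁ σ₂) q)

theorem sumAlgEquiv_rename_sumCongr (σ : Equiv.Perm (Fin m)) (τ : Equiv.Perm (Fin m'))
    (p : MvPolynomial (Fin m ⊕ Fin m') R) :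
    sumAlgEquiv R _ _ (rename (Equiv.Perm.sumCongr σ τ) p) =
      rename σ (map (rename (R := R) τ).toRingHom (sumAlgEquiv R _ _ p)) := by
  induction p using MvPolynomial.induction_on with
  | C r => simp
  | add p q hp hq => simp [hp, hq]
  | mul_X p v hp => cases v <;> simp [hp]

variable (R m m') in
noncomputable def esymmSumAlgHom :
    MvPolynomial (Fin m ⊕ Fin m') R →ₐ[R] MvPolynomial (Fin m ⊕ Fin m') R :=
  aeval (Sum.elim (fun i => rename Sum.inl (esymm (Fin m) R (i + 1)))
    (fun i => rename Sum.inr (esymm (Fin m') R (i + 1))))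

theorem sumAlgEquiv_esymmSumAlgHom (H : MvPolynomial (Fin m ⊕ Fin m') R) :
    sumAlgEquiv R _ _ (esymmSumAlgHom R m m' H) =
      aeval (fun i : Fin m => esymm (Fin m) (MvPolynomial (Fin m') R) (i + 1))
        (map (aeval fun i : Fin m' => esymm (Fin m') R (i + 1)).toRingHom
          (sumAlgEquiv R _ _ H)) := by
  induction H using MvPolynomial.induction_on with
  | C r => simp [esymmSumAlgHom]
  | add p q hp hq => simp [hp, hq]
  | mul_X p v hp =>
    rw [map_mul, map_mul, hp]
    cases v <;> simp [esymmSumAlgHom, sumAlgEquiv_rename_inl, sumAlgEquiv_rename_inr, map_esymm]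

theorem exists_esymmSumAlgHom_eq {P : MvPolynomial (Fin m ⊕ Fin m') R}
    (hP : ∀ σ τ, rename (Equiv.Perm.sumCongr σ τ) P = P) : ∃ H, esymmSumAlgHom R m m' H = P := by
  set e := sumAlgEquiv R (Fin m) (Fin m')
  have hsymm : (e P).IsSymmetric := fun σ => by
    simpa [hP, e, map_id] using (sumAlgEquiv_rename_sumCongr σ 1 P).symm
  obtain ⟨G, hG⟩ := hsymm.exists_aeval_esymm_eq
  -- symmetry of `e P` in the coefficient variables passes to `G` by injectivity of `aeval esymm`
  have hcoeff (d) : (G.coeff d).IsSymmetric := fun τ => by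
    have hτP : map (rename τ).toRingHom (e P) = e P := by
      simpa [hP, e] using (sumAlgEquiv_rename_sumCongr 1 τ P).symm
    have hτ : map (rename τ).toRingHom G = G := aeval_esymm_injective <| by
      rw [← map_aeval_esymm, hG, hτP]
    simpa [coeff_map] using congrArg (coeff d) hτ
  obtain ⟨G', rfl⟩ :
      G ∈ Set.range (map (aeval fun i : Fin m' => esymm (Fin m') R (i + 1)).toRingHom) := by
    refine mem_range_map_iff_coeffs_subset.mpr fun c hc => ?_
    obtain ⟨d, -, rfl⟩ := mem_coeffs_iff.mp hc
    exact (hcoeff d).exists_aeval_esymm_eq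
  exact ⟨e.symm G', e.injective (by rw [sumAlgEquiv_esymmSumAlgHom, e.apply_symm_apply, hG])⟩

end Symmetric

section Vandermonde

variable (R : Type*) [CommRing R] (n : ℕ)

noncomputable def vandermondePoly : MvPolynomial (Fin n) R :=
  ∏ j, ∏ k ∈ Finset.Ioi j, (X j - X k)

noncomputable def blockVandermonde : MvPolynomial (Fin n ⊕ Fin n) R :=
  rename Sum.inl (vandermondePoly R n) * rename Sum.inr (vandermondePoly R n)

variable {R n}

theorem rename_vandermondePoly (σ : Equiv.Perm (Fin n)) :
    rename σ (vandermondePoly R n) = Equiv.Perm.sign σ * vandermondePoly R n := by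
  simpa [vandermondePoly, map_prod] using Finset.prod_prod_Ioi_sub_comp_perm X σ

theorem vandermondePoly_ne_zero [IsDomain R] : vandermondePoly R n ≠ 0 :=
  Finset.prod_ne_zero_iff.mpr fun _ _ => Finset.prod_ne_zero_iff.mpr fun _ hk =>
    sub_ne_zero.mpr (X_injective.ne (Finset.mem_Ioi.mp hk).ne)

theorem blockVandermonde_ne_zero [IsDomain R] : blockVandermonde R n ≠ 0 :=
  mul_ne_zero ((rename_injective _ Sum.inl_injective).ne vandermondePoly_ne_zero)
    ((rename_injective _ Sum.inr_injective).ne vandermondePoly_ne_zero)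

-- `<` on `Fin n ⊕ Fin n` only compares variables of the same block.
theorem prod_filter_lt_X_sub_X_eq_blockVandermonde [DecidableLT (Fin n ⊕ Fin n)] :
    ∏ p ∈ Finset.univ.filter (fun p : (Fin n ⊕ Fin n) × (Fin n ⊕ Fin n) => p.1 < p.2),
      (X p.1 - X p.2 : MvPolynomial _ R) = blockVandermonde R n := by
  simp [Finset.prod_filter, Fintype.prod_prod_type, Fintype.prod_sum_type, blockVandermonde,
    vandermondePoly, map_prod, ← Finset.filter_lt_eq_Ioi, apply_ite]

theorem rename_sumCongr_blockVandermonde (σ τ : Equiv.Perm (Fin n)) :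
    rename (Equiv.Perm.sumCongr σ τ) (blockVandermonde R n) =
      Equiv.Perm.sign σ * Equiv.Perm.sign τ * blockVandermonde R n := by
  have hl : (Equiv.Perm.sumCongr σ τ ∘ Sum.inl : Fin n → Fin n ⊕ Fin n) = Sum.inl ∘ σ := rfl
  have hr : (Equiv.Perm.sumCongr σ τ ∘ Sum.inr : Fin n → Fin n ⊕ Fin n) = Sum.inr ∘ τ := rfl
  rw [blockVandermonde, map_mul, rename_rename, rename_rename, hl, hr, ← rename_rename σ,
    ← rename_rename τ, rename_vandermondePoly, rename_vandermondePoly]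
  simp only [map_mul, map_intCast]
  ring

end Vandermonde

end MvPolynomial

section BergmanPolynomials

variable (R : Type*) [CommRing R] (n : ℕ)

noncomputable def bergmanDenom : MvPolynomial (Fin n ⊕ Fin n) R :=
  ∏ j, ∏ k, (1 - X (Sum.inl j) * X (Sum.inr k)) ^ 2

-- `bergmanDenom * det[(1 - x_j y_k)⁻²]`, with the factor `∏_l (1 - x_j y_l)²` taken into row `j`
noncomputable def bergmanNumer : MvPolynomial (Fin n ⊕ Fin n) R :=
  (Matrix.of fun j k => ∏ l ∈ Finset.univ.erase k, (1 - X (Sum.inl j) * X (Sum.inr l)) ^ 2).det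

variable {R n}

theorem rename_sumCongr_bergmanDenom (σ τ : Equiv.Perm (Fin n)) :
    rename (Equiv.Perm.sumCongr σ τ) (bergmanDenom R n) = bergmanDenom R n := by
  simp only [bergmanDenom, map_prod, map_pow, map_sub, map_one, map_mul, rename_X,
    Equiv.Perm.sumCongr_apply, Sum.map_inl, Sum.map_inr]
  rw [Equiv.prod_comp σ fun j => ∏ k, (1 - X (Sum.inl j) * X (Sum.inr (τ k))) ^ 2]
  exact Finset.prod_congr rfl fun j _ =>
    Equiv.prod_comp τ fun k => (1 - X (Sum.inl j) * X (Sum.inr k)) ^ 2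

theorem rename_sumCongr_bergmanNumer (σ τ : Equiv.Perm (Fin n)) :
    rename (Equiv.Perm.sumCongr σ τ) (bergmanNumer R n) =
      Equiv.Perm.sign σ * Equiv.Perm.sign τ * bergmanNumer R n := by
  set M : Matrix (Fin n) (Fin n) (MvPolynomial (Fin n ⊕ Fin n) R) :=
    Matrix.of fun j k => ∏ l ∈ Finset.univ.erase k, (1 - X (Sum.inl j) * X (Sum.inr l)) ^ 2
  have hM : M.map (rename (Equiv.Perm.sumCongr σ τ)) = (M.submatrix σ id).submatrix id τ := by
    refine Matrix.ext fun j k => ?_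
    simp only [M, Matrix.map_apply, Matrix.submatrix_apply, Matrix.of_apply, id, map_prod,
      map_pow, map_sub, map_one, map_mul, rename_X, Equiv.Perm.sumCongr_apply, Sum.map_inl,
      Sum.map_inr]
    exact Finset.prod_equiv τ (by simp) (by simp)
  rw [bergmanNumer, AlgHom.map_det, AlgHom.mapMatrix_apply, hM, Matrix.det_permute',
    Matrix.det_permute]
  ring

theorem blockVandermonde_dvd_bergmanNumer [IsDomain R] [CharZero R] :
    blockVandermonde R n ∣ bergmanNumer R n := by
  classical
  rw [← prod_filter_lt_X_sub_X_eq_blockVandermonde]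
  refine prod_X_sub_X_dvd fun a b hab => X_sub_X_dvd_of_rename_swap hab.ne ?_
  rcases hab with ⟨hjk⟩ | ⟨hjk⟩
  · rw [← Equiv.Perm.sumCongr_swap_refl, ← Equiv.Perm.one_def, rename_sumCongr_bergmanNumer]
    simp [Equiv.Perm.sign_swap hjk.ne]
  · rw [← Equiv.Perm.sumCongr_refl_swap, ← Equiv.Perm.one_def, rename_sumCongr_bergmanNumer]
    simp [Equiv.Perm.sign_swap hjk.ne]

theorem exists_bergmanNumer_eq_and_bergmanDenom_eq [IsDomain R] [CharZero R] :
    ∃ H₁ H₂, bergmanNumer R n = blockVandermonde R n * esymmSumAlgHom R n n H₁ ∧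
      esymmSumAlgHom R n n H₂ = bergmanDenom R n := by
  obtain ⟨Q, hQ⟩ := blockVandermonde_dvd_bergmanNumer (R := R) (n := n)
  have hQsymm (σ τ : Equiv.Perm (Fin n)) : rename (Equiv.Perm.sumCongr σ τ) Q = Q := by
    have h := congrArg (rename (Equiv.Perm.sumCongr σ τ)) hQ
    rw [map_mul, rename_sumCongr_bergmanNumer, rename_sumCongr_blockVandermonde, hQ,
      ← mul_assoc] at h
    have hsign : IsUnit
        ((Equiv.Perm.sign σ : ℤ) * (Equiv.Perm.sign τ : ℤ) : MvPolynomial (Fin n ⊕ Fin n) R) :=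
      ((Equiv.Perm.sign σ).isUnit.map (Int.castRingHom _)).mul
        ((Equiv.Perm.sign τ).isUnit.map (Int.castRingHom _))
    exact mul_left_cancel₀ (mul_ne_zero hsign.ne_zero blockVandermonde_ne_zero) h.symm
  obtain ⟨H₁, rfl⟩ := exists_esymmSumAlgHom_eq hQsymm
  obtain ⟨H₂, hH₂⟩ := exists_esymmSumAlgHom_eq (rename_sumCongr_bergmanDenom (R := R) (n := n))
  exact ⟨H₁, H₂, hQ, hH₂⟩

end BergmanPolynomials

section Evaluation

variable {n : ℕ}

theorem eval_esymmSumAlgHom (lam mu : Fin n → ℂ) (H : MvPolynomial (Fin n ⊕ Fin n) ℂ) :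
    eval (Sum.elim lam mu) (esymmSumAlgHom ℂ n n H) =
      eval (Sum.elim (symmMap n lam) (symmMap n mu)) H := by
  rw [esymmSumAlgHom, aeval_eq_bind₁, eval, eval₂Hom_bind₁, eval]
  congr 2 with v
  cases v <;> simp [esymm, symmMap, map_sum, map_prod]

theorem eval_bergmanDenom (lam mu : Fin n → ℂ) :
    eval (Sum.elim lam mu) (bergmanDenom ℂ n) = ∏ j, ∏ k, (1 - lam j * mu k) ^ 2 := by
  simp [bergmanDenom, map_prod]

theorem eval_bergmanDenom_ne_zero {lam mu : Fin n → ℂ} (h : ∀ j k, 1 - lam j * mu k ≠ 0) :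
    eval (Sum.elim lam mu) (bergmanDenom ℂ n) ≠ 0 := by
  rw [eval_bergmanDenom]
  exact Finset.prod_ne_zero_iff.mpr fun j _ =>
    Finset.prod_ne_zero_iff.mpr fun k _ => pow_ne_zero 2 (h j k)

theorem eval_bergmanNumer (lam mu : Fin n → ℂ) :
    eval (Sum.elim lam mu) (bergmanNumer ℂ n) =
      (Matrix.of fun j k => ∏ l ∈ Finset.univ.erase k, (1 - lam j * mu l) ^ 2).det := by
  rw [bergmanNumer, RingHom.map_det]
  congr 1
  refine Matrix.ext fun j k => ?_
  simp [map_prod]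

theorem eval_blockVandermonde (lam mu : Fin n → ℂ) :
    eval (Sum.elim lam mu) (blockVandermonde ℂ n) =
      vandermondeProd n lam * vandermondeProd n mu := by
  simp [blockVandermonde, vandermondePoly, vandermondeProd, map_prod]

theorem symmMap_comp_ringHom (f : ℂ →+* ℂ) (lam : Fin n → ℂ) :
    symmMap n (f ∘ lam) = f ∘ symmMap n lam := by
  funext k
  simp [symmMap, map_sum, map_prod]

theorem vandermondeProd_comp_ringHom (f : ℂ →+* ℂ) (lam : Fin n → ℂ) :
    vandermondeProd n (f ∘ lam) = f (vandermondeProd n lam) := by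
  simp [vandermondeProd, map_prod]

theorem vandermondeProd_ne_zero {lam : Fin n → ℂ} (h : Function.Injective lam) :
    vandermondeProd n lam ≠ 0 :=
  Finset.prod_ne_zero_iff.mpr fun _ _ => Finset.prod_ne_zero_iff.mpr fun _ hk =>
    sub_ne_zero.mpr (h.ne (Finset.mem_Ioi.mp hk).ne)

theorem det_inv_sq_div_vandermondeProd_eq {H₁ H₂ : MvPolynomial (Fin n ⊕ Fin n) ℂ}
    (hN : bergmanNumer ℂ n = blockVandermonde ℂ n * esymmSumAlgHom ℂ n n H₁)
    (hD : esymmSumAlgHom ℂ n n H₂ = bergmanDenom ℂ n) {lam mu : Fin n → ℂ}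
    (h : ∀ j k, 1 - lam j * mu k ≠ 0) (hlam : Function.Injective lam)
    (hmu : Function.Injective mu) :
    (Matrix.of fun j k => ((1 - lam j * mu k) ^ 2)⁻¹).det /
        (vandermondeProd n lam * vandermondeProd n mu) =
      eval (Sum.elim (symmMap n lam) (symmMap n mu)) H₁ /
        eval (Sum.elim (symmMap n lam) (symmMap n mu)) H₂ := by
  rw [← eval_esymmSumAlgHom, ← eval_esymmSumAlgHom, hD,
    Matrix.det_of_inv_eq_div _ fun j k => pow_ne_zero 2 (h j k), ← eval_bergmanNumer,
    ← eval_bergmanDenom, hN, map_mul, eval_blockVandermonde, mul_div_assoc, mul_div_cancel_left₀ _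
      (mul_ne_zero (vandermondeProd_ne_zero hlam) (vandermondeProd_ne_zero hmu))]

end Evaluation

theorem one_sub_mul_ne_zero_of_norm_lt_one {a b : ℂ} (ha : ‖a‖ < 1) (hb : ‖b‖ < 1) :
    1 - a * b ≠ 0 := by
  refine sub_ne_zero.mpr fun h => ?_
  have : ‖a * b‖ < 1 := by
    rw [norm_mul]
    nlinarith [norm_nonneg a, norm_nonneg b]
  simp [← h] at this

/-- The Bergman kernel of the symmetrized polydisc is a rational function: there are
polynomials `H₁, H₂` in `2n` variables, `H₂` nonvanishing on `𝔾_n × conj(𝔾_n)`, such that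
`det[(1 − λ_j conj(μ_k))⁻²] / (V(λ)·conj(V(μ))) = H₁(π_n(λ), conj(π_n(μ))) / H₂(π_n(λ), conj(π_n(μ)))`
for all `λ, μ ∈ 𝔻^n` with pairwise distinct coordinates. -/
theorem bergman_kernel_symmPolydisc_rational (n : ℕ) :
    ∃ H₁ H₂ : MvPolynomial (Fin n ⊕ Fin n) ℂ,
      (∀ ξ ∈ symmPolydisc n, ∀ η ∈ symmPolydisc n,
        eval (Sum.elim ξ (fun j => (starRingEnd ℂ) (η j))) H₂ ≠ 0) ∧
      (∀ lam ∈ polydisc n, ∀ mu ∈ polydisc n,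
        Function.Injective lam → Function.Injective mu →
        Matrix.det (Matrix.of fun j k : Fin n =>
              ((1 - lam j * (starRingEnd ℂ) (mu k)) ^ 2)⁻¹)
            / (vandermondeProd n lam * (starRingEnd ℂ) (vandermondeProd n mu))
          = eval (Sum.elim (symmMap n lam)
                (fun j => (starRingEnd ℂ) (symmMap n mu j))) H₁
            / eval (Sum.elim (symmMap n lam)
                (fun j => (starRingEnd ℂ) (symmMap n mu j))) H₂) := by
  obtain ⟨H₁, H₂, hN, hD⟩ := exists_bergmanNumer_eq_and_bergmanDenom_eq (R := ℂ) (n := n)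
  have hconj (mu : Fin n → ℂ) :
      (fun j => starRingEnd ℂ (symmMap n mu j)) = symmMap n (starRingEnd ℂ ∘ mu) :=
    (symmMap_comp_ringHom _ mu).symm
  have hfactor {lam mu : Fin n → ℂ} (hlam : lam ∈ polydisc n) (hmu : mu ∈ polydisc n)
      (j k : Fin n) : 1 - lam j * (starRingEnd ℂ ∘ mu) k ≠ 0 :=
    one_sub_mul_ne_zero_of_norm_lt_one (hlam j) (by simpa using hmu k)
  refine ⟨H₁, H₂, ?_, ?_⟩
  · rintro _ ⟨lam, hlam, rfl⟩ _ ⟨mu, hmu, rfl⟩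
    rw [hconj, ← eval_esymmSumAlgHom, hD]
    exact eval_bergmanDenom_ne_zero (hfactor hlam hmu)
  · intro lam hlam mu hmu hlam_inj hmu_inj
    rw [hconj, ← vandermondeProd_comp_ringHom]
    exact det_inv_sq_div_vandermondeProd_eq hN hD (hfactor hlam hmu) hlam_inj
      ((starRingEnd ℂ).injective.comp hmu_inj)
end
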